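/- Let 0<q<1, w∈ℂ∖{0}, u := |w|q/(1−q²), H(t) := 4·Σ_{n=1}^∞ n·e^{−t|w|[n]_q} and H_S(t) := 4·Σ_{n=1}^∞ n·e^{−t·u·q^{−n}}. Then for every t>0 one has H(t) − H_S(t) > 0, and H(t) − H_S(t) = O(t·log²t) as t→0⁺; i.e. there exist C>0 and t₀∈(0,1) such that 0 < H(t) − H_S(t) ≤ C·t·(log t)² for all t∈(0,t₀). In particular lim_{t→0⁺} (H(t) − H_S(t)) = 0. -/

import Mathlib

open Complex Real Filter

/-! The eigenvalues `|w|[n]_q = u q^{-n} - u q^n` of `D` fall short of the eigenvalues `u q^{-n}`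
of `D_S` by the summable amounts `u q^n`. Since `0 ≤ e^{-a} - e^{-b} ≤ b - a` for `0 ≤ a ≤ b`, the
`n`-th terms of the two heat traces differ by at most `n t u q^n`, hence
`0 < H(t) - H_S(t) ≤ 4 t u Σ n q^n = 4 t u q / (1 - q)²`. This `O(t)` bound is stronger than
`O(t log² t)` and squeezes the difference to `0`. -/

/-- The q-number `[n]_q = (q^{-n} - q^n)/(q^{-1} - q)`. -/
noncomputable def qnum (q : ℝ) (n : ℕ) : ℝ :=
  (q ^ (-(n : ℤ)) - q ^ (n : ℤ)) / (q ^ (-1 : ℤ) - q)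

/-- The heat trace `H(t) = 4 Σ_{n≥1} n e^{-t|w|[n]_q}` of the full Dirac operator. -/
noncomputable def heatTrace (q : ℝ) (w : ℂ) (t : ℝ) : ℝ :=
  4 * ∑' n : ℕ, ((n : ℝ) + 1) * Real.exp (-(t * (‖w‖ * qnum q (n + 1))))

/-- The heat trace `H_S(t) = 4 Σ_{n≥1} n e^{-t u q^{-n}}` of the simplified Dirac
operator, with `u = |w|q/(1-q²)`. -/
noncomputable def heatTraceS (q : ℝ) (w : ℂ) (t : ℝ) : ℝ :=
  4 * ∑' n : ℕ, ((n : ℝ) + 1) *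
    Real.exp (-(t * (‖w‖ * q / (1 - q ^ 2) * q ^ (-((n : ℤ) + 1)))))

lemma Real.exp_neg_sub_exp_neg_le {a b : ℝ} (ha : 0 ≤ a) (hab : a ≤ b) :
    Real.exp (-a) - Real.exp (-b) ≤ b - a :=
  calc Real.exp (-a) - Real.exp (-b) = Real.exp (-a) * (1 - Real.exp (-(b - a))) := by
        rw [mul_sub, ← Real.exp_add]; ring_nf
    _ ≤ 1 * (b - a) :=
        mul_le_mul (Real.exp_le_one_iff.2 (by linarith)) (by linarith [one_sub_le_exp_neg (b - a)])
          (sub_nonneg.2 (Real.exp_le_one_iff.2 (by linarith))) zero_le_one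
    _ = b - a := one_mul _

section ExpPerturbation

variable {m a b : ℕ → ℝ}

lemma summable_mul_exp_neg_of_sub (hm : ∀ n, 0 ≤ m n) (ha : ∀ n, 0 ≤ a n)
    (hab : ∀ n, a n ≤ b n) (hb : Summable fun n => m n * Real.exp (-b n))
    (hd : Summable fun n => m n * (b n - a n)) :
    Summable fun n => m n * Real.exp (-a n) := by
  refine (hb.add hd).of_nonneg_of_le (fun n => mul_nonneg (hm n) (Real.exp_pos _).le) fun n => ?_
  nlinarith [mul_le_mul_of_nonneg_left (Real.exp_neg_sub_exp_neg_le (ha n) (hab n)) (hm n)]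

lemma tsum_mul_exp_neg_sub_le (hm : ∀ n, 0 ≤ m n) (ha : ∀ n, 0 ≤ a n)
    (hab : ∀ n, a n ≤ b n) (hb : Summable fun n => m n * Real.exp (-b n))
    (hd : Summable fun n => m n * (b n - a n)) :
    ∑' n, m n * Real.exp (-a n) - ∑' n, m n * Real.exp (-b n) ≤ ∑' n, m n * (b n - a n) := by
  have hsa := summable_mul_exp_neg_of_sub hm ha hab hb hd
  rw [← hsa.tsum_sub hb]
  refine (hsa.sub hb).tsum_le_tsum (fun n => ?_) hd
  rw [← mul_sub]
  exact mul_le_mul_of_nonneg_left (Real.exp_neg_sub_exp_neg_le (ha n) (hab n)) (hm n)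

lemma tsum_mul_exp_neg_lt (hm : ∀ n, 0 ≤ m n) (hab : ∀ n, a n ≤ b n)
    (hb : Summable fun n => m n * Real.exp (-b n)) (hsa : Summable fun n => m n * Real.exp (-a n))
    {i : ℕ} (hmi : 0 < m i) (habi : a i < b i) :
    ∑' n, m n * Real.exp (-b n) < ∑' n, m n * Real.exp (-a n) :=
  hb.tsum_lt_tsum (fun n => mul_le_mul_of_nonneg_left (Real.exp_le_exp.2 (neg_le_neg (hab n))) (hm n))
    (mul_lt_mul_of_pos_left (Real.exp_lt_exp.2 (neg_lt_neg habi)) hmi) hsa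

end ExpPerturbation

lemma hasSum_succ_mul_pow_succ {r : ℝ} (hr : ‖r‖ < 1) :
    HasSum (fun n : ℕ => ((n : ℝ) + 1) * r ^ (n + 1)) (r / (1 - r) ^ 2) := by
  have h := (hasSum_nat_add_iff' (f := fun n : ℕ => (n : ℝ) * r ^ n) 1).2
    (hasSum_coe_mul_geometric_of_norm_lt_one hr)
  simpa only [Finset.sum_range_one, Nat.cast_zero, zero_mul, sub_zero, Nat.cast_succ] using h

lemma summable_succ_mul_exp_neg_of_linear_le {b : ℕ → ℝ} {κ : ℝ} (hκ : 0 < κ)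
    (hb : ∀ n : ℕ, κ * ((n : ℝ) + 1) ≤ b n) :
    Summable fun n : ℕ => ((n : ℝ) + 1) * Real.exp (-b n) := by
  have hr : ‖Real.exp (-κ)‖ < 1 := by
    rw [norm_of_nonneg (Real.exp_pos _).le, Real.exp_lt_one_iff]; linarith
  refine (hasSum_succ_mul_pow_succ hr).summable.of_nonneg_of_le
    (fun n => mul_nonneg (by positivity) (Real.exp_pos _).le) fun n => ?_
  refine mul_le_mul_of_nonneg_left ?_ (by positivity)
  rw [← Real.exp_nat_mul, Real.exp_le_exp]
  push_cast
  linarith [hb n]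

lemma succ_mul_inv_sub_one_le_zpow_neg {q : ℝ} (hq : 0 < q) (n : ℕ) :
    ((n : ℝ) + 1) * (q⁻¹ - 1) ≤ q ^ (-((n : ℤ) + 1)) := by
  have hbern := one_add_mul_le_pow (a := q⁻¹ - 1) (by linarith [inv_pos.2 hq]) (n + 1)
  rw [add_sub_cancel] at hbern
  rw [zpow_neg, ← inv_zpow]
  exact_mod_cast (by linarith : ((n + 1 : ℕ) : ℝ) * (q⁻¹ - 1) ≤ q⁻¹ ^ (n + 1))

lemma qnum_eq (q : ℝ) (n : ℕ) :
    qnum q n = q / (1 - q ^ 2) * (q ^ (-(n : ℤ)) - q ^ (n : ℤ)) := by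
  rcases eq_or_ne q 0 with rfl | hq
  · simp [qnum]
  · have hden : q ^ (-1 : ℤ) - q = (1 - q ^ 2) / q := by
      rw [zpow_neg_one]; field_simp
    rw [qnum, hden, div_div_eq_mul_div]
    ring

lemma qnum_nonneg {q : ℝ} (hq : 0 < q) (hq1 : q < 1) (n : ℕ) : 0 ≤ qnum q n := by
  have h1q2 : 0 < 1 - q ^ 2 := by nlinarith
  rw [qnum_eq]
  refine mul_nonneg (by positivity) (sub_nonneg.2 ?_)
  exact zpow_le_zpow_right_of_le_one₀ hq hq1.le (by omega)

lemma norm_mul_qnum_succ (q : ℝ) (w : ℂ) (n : ℕ) :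
    ‖w‖ * qnum q (n + 1) =
      ‖w‖ * q / (1 - q ^ 2) * q ^ (-((n : ℤ) + 1)) - ‖w‖ * q / (1 - q ^ 2) * q ^ (n + 1) := by
  rw [qnum_eq, zpow_natCast]; push_cast; ring

lemma norm_mul_div_one_sub_sq_pos {q : ℝ} (hq : 0 < q) (hq1 : q < 1) {w : ℂ} (hw : w ≠ 0) :
    0 < ‖w‖ * q / (1 - q ^ 2) :=
  div_pos (mul_pos (norm_pos_iff.2 hw) hq) (by nlinarith)

section HeatTrace

variable {q : ℝ} {w : ℂ}

lemma summable_heatTraceS_terms (hq : 0 < q) (hq1 : q < 1) (hw : w ≠ 0) {t : ℝ} (ht : 0 < t) :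
    Summable fun n : ℕ => ((n : ℝ) + 1) *
      Real.exp (-(t * (‖w‖ * q / (1 - q ^ 2) * q ^ (-((n : ℤ) + 1))))) := by
  have hu := norm_mul_div_one_sub_sq_pos hq hq1 hw
  have hq' : 0 < q⁻¹ - 1 := sub_pos.2 ((one_lt_inv₀ hq).2 hq1)
  refine summable_succ_mul_exp_neg_of_linear_le (κ := t * (‖w‖ * q / (1 - q ^ 2)) * (q⁻¹ - 1))
    (by positivity) fun n => ?_
  have := mul_le_mul_of_nonneg_left (succ_mul_inv_sub_one_le_zpow_neg hq n) (mul_pos ht hu).le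
  linarith

lemma heatTrace_sub_heatTraceS_mem_Ioc (hq : 0 < q) (hq1 : q < 1) (hw : w ≠ 0) {t : ℝ}
    (ht : 0 < t) :
    heatTrace q w t - heatTraceS q w t ∈
      Set.Ioc 0 (4 * (‖w‖ * q / (1 - q ^ 2)) * (q / (1 - q) ^ 2) * t) := by
  set u := ‖w‖ * q / (1 - q ^ 2)
  have hu : 0 < u := norm_mul_div_one_sub_sq_pos hq hq1 hw
  set m : ℕ → ℝ := fun n => (n : ℝ) + 1
  set a : ℕ → ℝ := fun n => t * (‖w‖ * qnum q (n + 1))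
  set b : ℕ → ℝ := fun n => t * (u * q ^ (-((n : ℤ) + 1)))
  have hm : ∀ n, 0 ≤ m n := fun n => by positivity
  have ha : ∀ n, 0 ≤ a n := fun n => by have := qnum_nonneg hq hq1 (n + 1); positivity
  have hgap : ∀ n, b n - a n = t * u * q ^ (n + 1) := fun n => by
    simp only [a, b]; rw [norm_mul_qnum_succ]; ring
  have hlt : ∀ n, a n < b n := fun n => sub_pos.1 (hgap n ▸ by positivity)
  have hab : ∀ n, a n ≤ b n := fun n => (hlt n).le
  have hb : Summable fun n => m n * Real.exp (-b n) := summable_heatTraceS_terms hq hq1 hw ht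
  have hd : HasSum (fun n => m n * (b n - a n)) (t * u * (q / (1 - q) ^ 2)) := by
    simp only [hgap, m, mul_left_comm _ (t * u)]
    exact (hasSum_succ_mul_pow_succ (by rwa [norm_of_nonneg hq.le])).mul_left (t * u)
  have hsa := summable_mul_exp_neg_of_sub hm ha hab hb hd.summable
  change 4 * ∑' n, m n * Real.exp (-a n) - 4 * ∑' n, m n * Real.exp (-b n) ∈ _
  rw [← mul_sub]
  constructor
  · have := tsum_mul_exp_neg_lt hm hab hb hsa (i := 0) (by positivity) (hlt 0)
    linarith
  · have := tsum_mul_exp_neg_sub_le hm ha hab hb hd.summable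
    rw [hd.tsum_eq] at this
    linarith

end HeatTrace

/-- `H(t) − H_S(t) > 0` for all `t > 0`, `H − H_S = O(t log²t)` as
`t → 0⁺`, and in particular `H(t) − H_S(t) → 0` as `t → 0⁺`. -/
theorem heatTrace_simplified_difference (q : ℝ) (hq : 0 < q) (hq1 : q < 1)
    (w : ℂ) (hw : w ≠ 0) :
    (∀ t : ℝ, 0 < t → 0 < heatTrace q w t - heatTraceS q w t) ∧
    (∃ C : ℝ, 0 < C ∧ ∃ t₀ ∈ Set.Ioo (0 : ℝ) 1, ∀ t ∈ Set.Ioo (0 : ℝ) t₀,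
      heatTrace q w t - heatTraceS q w t ≤ C * t * (Real.log t) ^ 2) ∧
    Filter.Tendsto (fun t : ℝ => heatTrace q w t - heatTraceS q w t)
      (nhdsWithin 0 (Set.Ioi 0)) (nhds 0) := by
  set C := 4 * (‖w‖ * q / (1 - q ^ 2)) * (q / (1 - q) ^ 2)
  have hC : 0 < C := by
    have := norm_mul_div_one_sub_sq_pos hq hq1 hw
    have : 0 < 1 - q := by linarith
    positivity
  have hbounds := fun t (ht : 0 < t) => heatTrace_sub_heatTraceS_mem_Ioc hq hq1 hw ht
  refine ⟨fun t ht => (hbounds t ht).1, ⟨C, hC, Real.exp (-1), ⟨Real.exp_pos _, Real.exp_lt_one_iff.2 (by norm_num)⟩, ?_⟩, ?_⟩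
  · rintro t ⟨ht, hte⟩
    have hlog : Real.log t < -1 := (Real.log_lt_iff_lt_exp ht).2 hte
    calc heatTrace q w t - heatTraceS q w t ≤ C * t := (hbounds t ht).2
      _ ≤ C * t * Real.log t ^ 2 := le_mul_of_one_le_right (by positivity) (by nlinarith)
  · have hCt : Tendsto (fun t : ℝ => C * t) (nhdsWithin 0 (Set.Ioi 0)) (nhds 0) :=
      tendsto_nhdsWithin_of_tendsto_nhds (by simpa using (continuous_const_mul C).tendsto 0)
    refine tendsto_of_tendsto_of_tendsto_of_le_of_le' tendsto_const_nhds hCt ?_ ?_ <;>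
      filter_upwards [self_mem_nhdsWithin] with t ht
    exacts [(hbounds t ht).1.le, (hbounds t ht).2]
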